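/- arXiv:2404.09718 — 2 statements merged into one kernel-verified Lean document; each statement's English description precedes it below -/
import Mathlib

section
/- For any Lebesgue-measurable function g : ℝ → ℝ, the set H(g) := {τ ∈ ℝ : g(t+τ) = g(t) for Lebesgue-almost every t ∈ ℝ} is a closed additive subgroup of ℝ. -/
open MeasureTheory Filter Convolution
open scoped ContDiff

/-- The set `H(g) = {τ | g(·+τ) = g a.e.}` is a closed additive subgroup of ℝ. -/
theorem stmt_0 (g : ℝ → ℝ) (hg : Measurable g) :
    (0 : ℝ) ∈ {τ : ℝ | ∀ᵐ t ∂volume, g (t + τ) = g t} ∧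
    (∀ a b : ℝ, a ∈ {τ : ℝ | ∀ᵐ t ∂volume, g (t + τ) = g t} →
      b ∈ {τ : ℝ | ∀ᵐ t ∂volume, g (t + τ) = g t} →
      a + b ∈ {τ : ℝ | ∀ᵐ t ∂volume, g (t + τ) = g t}) ∧
    (∀ a : ℝ, a ∈ {τ : ℝ | ∀ᵐ t ∂volume, g (t + τ) = g t} →
      -a ∈ {τ : ℝ | ∀ᵐ t ∂volume, g (t + τ) = g t}) ∧
    IsClosed {τ : ℝ | ∀ᵐ t ∂volume, g (t + τ) = g t} := by
  refine ⟨by simp, ?_, ?_, ?_⟩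
  · intro a b ha hb
    simp only [Set.mem_setOf_eq] at ha hb ⊢
    have ha' : ∀ᵐ t ∂(volume : Measure ℝ), g ((t + b) + a) = g (t + b) :=
      (measurePreserving_add_right volume b).quasiMeasurePreserving.ae ha
    filter_upwards [ha', hb] with t h1 h2
    calc g (t + (a + b)) = g ((t + b) + a) := by ring_nf
      _ = g (t + b) := h1
      _ = g t := h2
  · intro a ha
    simp only [Set.mem_setOf_eq] at ha ⊢
    have ha' : ∀ᵐ t ∂(volume : Measure ℝ), g ((t + -a) + a) = g (t + -a) :=
      (measurePreserving_add_right volume (-a)).quasiMeasurePreserving.ae ha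
    filter_upwards [ha'] with t h1
    simpa using h1.symm
  -- closedness
  set f : ℝ → ℝ := fun t => Real.arctan (g t) with hf_def
  have hfm : Measurable f := Real.measurable_arctan.comp hg
  have hfb : ∀ x, ‖f x‖ ≤ Real.pi / 2 := by
    intro x
    rw [Real.norm_eq_abs, abs_le]
    exact ⟨(Real.neg_pi_div_two_lt_arctan _).le, (Real.arctan_lt_pi_div_two _).le⟩
  have hfl : LocallyIntegrable f volume :=
    (memLp_top_of_bound hfm.aestronglyMeasurable _
      (Filter.Eventually.of_forall hfb)).locallyIntegrable le_top
  -- equivalence with f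
  have hiff : ∀ τ : ℝ, (∀ᵐ t ∂(volume : Measure ℝ), g (t + τ) = g t) ↔
      (∀ᵐ t ∂(volume : Measure ℝ), f (t + τ) = f t) := by
    intro τ
    constructor
    · intro h; filter_upwards [h] with t ht; simp [hf_def, ht]
    · intro h; filter_upwards [h] with t ht
      exact Real.arctan_injective ht
  -- integrability facts
  have hint : ∀ (φ : ℝ → ℝ), Continuous φ → HasCompactSupport φ → ∀ τ h : ℝ,
      Integrable (fun t => f (t + h) * φ (t - τ)) volume := by
    intro φ hφ hc τ h
    have h1 : Integrable (fun t : ℝ => φ (t - τ)) volume := by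
      have : Continuous (fun t : ℝ => φ (t - τ)) := hφ.comp (continuous_sub_right τ)
      exact this.integrable_of_hasCompactSupport
        (hc.comp_homeomorph (Homeomorph.subRight τ))
    exact h1.bdd_mul ((hfm.comp (measurable_add_const h)).aestronglyMeasurable)
      (Filter.Eventually.of_forall (fun x => hfb _))
  -- the family of closed conditions
  have key : {τ : ℝ | ∀ᵐ t ∂volume, g (t + τ) = g t} =
      ⋂ φ : {φ : ℝ → ℝ // ContDiff ℝ ∞ φ ∧ HasCompactSupport φ},
        {τ : ℝ | (∫ t, f t * φ.1 (t - τ)) = ∫ t, f t * φ.1 t} := by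
    ext τ
    simp only [Set.mem_setOf_eq, Set.mem_iInter, hiff τ]
    constructor
    · rintro h ⟨φ, hφ, hc⟩
      have := MeasureTheory.integral_add_right_eq_self (μ := volume)
        (fun s => f s * φ (s - τ)) τ
      rw [← this]
      simp only
      have : ∀ᵐ t ∂(volume : Measure ℝ),
          f (t + τ) * φ (t + τ - τ) = f t * φ t := by
        filter_upwards [h] with t ht
        rw [ht]; ring_nf
      exact integral_congr_ae this
    · intro h
      have h0 : ∀ᵐ t ∂(volume : Measure ℝ), f (t + τ) - f t = 0 := by
        apply ae_eq_zero_of_integral_contDiff_smul_eq_zero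
          (((memLp_top_of_bound ((hfm.comp (measurable_add_const τ)).aestronglyMeasurable) _
            (Filter.Eventually.of_forall (fun x => hfb (x + τ)))).locallyIntegrable le_top).sub hfl)
        intro φ hφ hc
        simp only [Pi.sub_apply, Function.comp_apply]
        have hι := h ⟨φ, hφ, hc⟩
        have hchg : (∫ t, f (t + τ) * φ t ∂(volume : Measure ℝ))
            = ∫ t, f t * φ (t - τ) := by
          rw [← MeasureTheory.integral_add_right_eq_self (μ := volume)
            (fun s => f s * φ (s - τ)) τ]
          congr 1; ext t; rw [add_sub_cancel_right]
        have hint1 := hint φ hφ.continuous hc 0 τ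
        have hint2 := hint φ hφ.continuous hc 0 0
        simp only [sub_zero, add_zero] at hint1 hint2
        have : (∫ t, φ t • (f (t + τ) - f t) ∂(volume : Measure ℝ))
            = (∫ t, f (t + τ) * φ t ∂(volume : Measure ℝ))
              - ∫ t, f t * φ t := by
          rw [← integral_sub]
          · congr 1; ext t; simp [smul_eq_mul]; ring
          · exact hint1.congr (by filter_upwards with t; ring_nf)
          · exact hint2.congr (by filter_upwards with t; ring_nf)
        rw [this, hchg, hι, sub_self]
      filter_upwards [h0] with t ht
      linarith [ht]
  rw [key]
  refine isClosed_iInter fun φ => isClosed_eq ?_ continuous_const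
  have h := (φ.2.2.comp_homeomorph (Homeomorph.neg ℝ)).continuous_convolution_right
    (ContinuousLinearMap.mul ℝ ℝ) hfl (φ.2.1.continuous.comp continuous_neg)
  convert h using 2 with τ
  simp [convolution, ContinuousLinearMap.mul_apply', sub_eq_add_neg]
end

section
/- Let Γ be a free semigroup on two generators a, b inside SL₂(ℝ), and suppose C ≥ 1 satisfies log‖s‖ ≤ (C/2)|s| for every s in the semigroup S generated by a and b, where |s| is the word length. Define ρ(s) ∈ SL₄(ℝ) as the block-diagonal matrix diag(s, e^{C|s|}, e^{−C|s|}). Then for the linear functional φ(diag(x,y,z,w)) = x on the diagonal Cartan subalgebra, every element of ρ(S) has φ applied to its Jordan projection lying in C·ℤ_{≥1}; in particular the length spectrum {φ(λ(ρ(s))) : s ∈ S} generates a discrete subgroup of ℝ. -/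
open Matrix

attribute [local instance] Matrix.linftyOpNormedRing

/-- The representation `s ↦ diag(s, e^{C|s|}, e^{−C|s|})` of a word `w` in the generators,
where `|s|` is the word length. -/
noncomputable def rho13 (C : ℝ) (w : List (Matrix (Fin 2) (Fin 2) ℝ)) :
    Matrix (Fin 2 ⊕ Fin 2) (Fin 2 ⊕ Fin 2) ℝ :=
  Matrix.fromBlocks w.prod 0 0
    (Matrix.diagonal ![Real.exp (C * w.length), Real.exp (-(C * w.length))])

/-- `φ(λ(g))` for `φ = first coordinate`: the log of the top eigenvalue modulus, i.e. the log
of the spectral radius of the complexified matrix. -/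
noncomputable def phiJordan13 (g : Matrix (Fin 2 ⊕ Fin 2) (Fin 2 ⊕ Fin 2) ℝ) : ℝ :=
  Real.log (spectralRadius ℂ (g.map (Complex.ofReal ·))).toReal

private lemma fromBlocks_sub' {l m α : Type*} [SubtractionMonoid α]
    (A A' : Matrix l l α) (B B' : Matrix l m α)
    (C C' : Matrix m l α) (D D' : Matrix m m α) :
    fromBlocks A B C D - fromBlocks A' B' C' D'
      = fromBlocks (A - A') (B - B') (C - C') (D - D') := by
  ext (i | i) (j | j) <;> simp [Matrix.sub_apply]

private lemma spectrum_fromBlocks' {m n : Type*} [Fintype m] [Fintype n] [DecidableEq m]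
    [DecidableEq n] (A : Matrix m m ℂ) (D : Matrix n n ℂ) :
    spectrum ℂ (Matrix.fromBlocks A 0 0 D) = spectrum ℂ A ∪ spectrum ℂ D := by
  ext k
  have halg : (algebraMap ℂ (Matrix (m ⊕ n) (m ⊕ n) ℂ) k)
      = Matrix.fromBlocks (algebraMap ℂ (Matrix m m ℂ) k) 0 0
          (algebraMap ℂ (Matrix n n ℂ) k) := by
    rw [Algebra.algebraMap_eq_smul_one, Algebra.algebraMap_eq_smul_one,
      Algebra.algebraMap_eq_smul_one, ← Matrix.fromBlocks_one, Matrix.fromBlocks_smul]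
    simp
  simp only [spectrum.mem_iff, Set.mem_union, halg, fromBlocks_sub', sub_zero,
    Matrix.isUnit_iff_isUnit_det, Matrix.det_fromBlocks_zero₂₁,
    isUnit_iff_ne_zero, ne_eq, mul_ne_zero_iff]
  tauto

private lemma norm_le_of_mem_spectrum' {m : Type*} [Fintype m] [DecidableEq m]
    {A : Matrix m m ℂ} {k : ℂ} (hk : k ∈ spectrum ℂ A) : ‖k‖ ≤ ‖A‖ := by
  rw [spectrum.mem_iff, Matrix.isUnit_iff_isUnit_det, isUnit_iff_ne_zero, ne_eq, not_not] at hk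
  obtain ⟨v, hv, hAv⟩ := (Matrix.exists_mulVec_eq_zero_iff).2 hk
  have h1 : (algebraMap ℂ (Matrix m m ℂ) k - A) *ᵥ v = k • v - A *ᵥ v := by
    rw [Matrix.sub_mulVec, Algebra.algebraMap_eq_smul_one, Matrix.smul_mulVec,
      Matrix.one_mulVec]
  rw [h1, sub_eq_zero] at hAv
  have hvpos : (0 : ℝ) < ‖v‖ := norm_pos_iff.2 hv
  have hle := Matrix.linfty_opNorm_mulVec A v
  rw [← hAv, norm_smul] at hle
  exact le_of_mul_le_mul_right hle hvpos

private lemma norm_map_ofReal' {m : Type*} [Fintype m] [DecidableEq m] (A : Matrix m m ℝ) :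
    ‖A.map (Complex.ofReal ·)‖ = ‖A‖ := by
  rw [Matrix.linfty_opNorm_def, Matrix.linfty_opNorm_def]
  congr 1
  refine Finset.sup_congr rfl fun i _ => ?_
  refine Finset.sum_congr rfl fun j _ => ?_
  ext
  simp [Matrix.map_apply]

/-- If `S` is a free semigroup on `a, b ∈ SL₂(ℝ)` with `log‖s‖ ≤ (C/2)|s|` on `S`, then for
`ρ(s) = diag(s, e^{C|s|}, e^{−C|s|}) ∈ SL₄(ℝ)` and `φ = (top diagonal coordinate)`, every
`φ(λ(ρ(s)))` lies in `C·ℤ_{≥1}`; in particular the length spectrum generates a discrete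
subgroup of `ℝ` (contained in `C·ℤ`). -/
theorem stmt_13 (a b : Matrix (Fin 2) (Fin 2) ℝ) (ha : a.det = 1) (hb : b.det = 1)
    (hfree : ∀ w w' : List (Matrix (Fin 2) (Fin 2) ℝ),
      (∀ x ∈ w, x = a ∨ x = b) → (∀ x ∈ w', x = a ∨ x = b) →
      w.prod = w'.prod → w = w')
    (C : ℝ) (hC : 1 ≤ C)
    (hnorm : ∀ w : List (Matrix (Fin 2) (Fin 2) ℝ), (∀ x ∈ w, x = a ∨ x = b) →
      Real.log ‖w.prod‖ ≤ (C / 2) * w.length) :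
    (∀ w : List (Matrix (Fin 2) (Fin 2) ℝ), w ≠ [] → (∀ x ∈ w, x = a ∨ x = b) →
      ∃ n : ℕ, 1 ≤ n ∧ phiJordan13 (rho13 C w) = C * n) ∧
    ∀ x ∈ AddSubgroup.closure
        {t : ℝ | ∃ w : List (Matrix (Fin 2) (Fin 2) ℝ), w ≠ [] ∧
          (∀ x ∈ w, x = a ∨ x = b) ∧ t = phiJordan13 (rho13 C w)},
      ∃ m : ℤ, x = C * m := by
  have main : ∀ w : List (Matrix (Fin 2) (Fin 2) ℝ), w ≠ [] → (∀ x ∈ w, x = a ∨ x = b) →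
      ∃ n : ℕ, 1 ≤ n ∧ phiJordan13 (rho13 C w) = C * n := by
    intro w hne hgen
    set n : ℕ := w.length with hn
    refine ⟨n, List.length_pos_iff.2 hne, ?_⟩
    set E : ℝ := Real.exp (C * n) with hE
    have hEpos : 0 < E := Real.exp_pos _
    have hCn : (0 : ℝ) ≤ C * n := by positivity
    -- determinant of the word is 1, hence the word is nonzero
    have hdetall : ∀ l : List (Matrix (Fin 2) (Fin 2) ℝ), (∀ x ∈ l, x = a ∨ x = b) →
        l.prod.det = 1 := by
      intro l
      induction l with
      | nil => simp
      | cons x t ih =>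
        intro hl
        rw [List.prod_cons, Matrix.det_mul, ih fun y hy => hl y (List.mem_cons_of_mem _ hy)]
        rcases hl x List.mem_cons_self with rfl | rfl <;> simp [ha, hb]
    have hdet : (w.prod).det = 1 := hdetall w hgen
    have hA0 : w.prod ≠ 0 := by
      intro h
      rw [h, Matrix.det_zero] at hdet
      exact one_ne_zero hdet.symm
    have hAnorm : ‖w.prod‖ ≤ E := by
      have h1 : ‖w.prod‖ = Real.exp (Real.log ‖w.prod‖) :=
        (Real.exp_log (norm_pos_iff.2 hA0)).symm
      rw [h1]
      refine Real.exp_le_exp.2 ((hnorm w hgen).trans ?_)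
      have : (C / 2) * (n : ℝ) ≤ C * n := by nlinarith [Nat.cast_nonneg (α := ℝ) n]
      exact this
    -- the complexified matrix
    set Ac : Matrix (Fin 2) (Fin 2) ℂ := (w.prod).map (Complex.ofReal ·) with hAc
    set vc : Fin 2 → ℂ := fun i => Complex.ofReal (![E, Real.exp (-(C * n))] i) with hvc
    have hmap : (rho13 C w).map (Complex.ofReal ·)
        = Matrix.fromBlocks Ac 0 0 (Matrix.diagonal vc) := by
      ext (i | i) (j | j) <;>
          simp [rho13, hvc, hAc, Matrix.map_apply, Matrix.diagonal, Matrix.fromBlocks] <;>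
        split_ifs <;> rfl
    have hspec : spectrum ℂ ((rho13 C w).map (Complex.ofReal ·))
        = spectrum ℂ Ac ∪ Set.range vc := by
      rw [hmap, spectrum_fromBlocks', spectrum_diagonal]
    -- compute the spectral radius
    have hrad : spectralRadius ℂ ((rho13 C w).map (Complex.ofReal ·))
        = (Real.toNNReal E : ENNReal) := by
      apply le_antisymm
      · rw [spectralRadius]
        refine iSup₂_le fun k hk => ?_
        rw [ENNReal.coe_le_coe, ← NNReal.coe_le_coe, coe_nnnorm,
          Real.coe_toNNReal _ hEpos.le]
        rw [hspec] at hk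
        rcases hk with hk | ⟨i, rfl⟩
        · calc ‖k‖ ≤ ‖Ac‖ := norm_le_of_mem_spectrum' hk
            _ = ‖w.prod‖ := norm_map_ofReal' _
            _ ≤ E := hAnorm
        · have h0 : vc 0 = Complex.ofReal E := by simp [hvc]
          have h1 : vc 1 = Complex.ofReal (Real.exp (-(C * n))) := by simp [hvc]
          fin_cases i
          · show ‖vc 0‖ ≤ E
            rw [h0, Complex.norm_real, Real.norm_eq_abs, abs_of_pos hEpos]
          · show ‖vc 1‖ ≤ E
            rw [h1, Complex.norm_real, Real.norm_eq_abs, abs_of_pos (Real.exp_pos _)]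
            exact Real.exp_le_exp.2 (by linarith)
      · have hmem : (Complex.ofReal E) ∈ spectrum ℂ ((rho13 C w).map (Complex.ofReal ·)) := by
          rw [hspec]
          exact Or.inr ⟨0, by simp [hvc, hE]⟩
        refine le_trans (le_of_eq ?_) (le_iSup₂ (α := ENNReal) _ hmem)
        rw [ENNReal.coe_inj]
        ext
        rw [coe_nnnorm, Real.coe_toNNReal _ hEpos.le, Complex.norm_real,
          Real.norm_eq_abs, abs_of_pos hEpos]
    rw [phiJordan13, hrad]
    simp only [ENNReal.coe_toReal, Real.coe_toNNReal _ hEpos.le]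
    rw [hE, Real.log_exp]
  refine ⟨main, ?_⟩
  intro x hx
  have hle : AddSubgroup.closure
      {t : ℝ | ∃ w : List (Matrix (Fin 2) (Fin 2) ℝ), w ≠ [] ∧
        (∀ x ∈ w, x = a ∨ x = b) ∧ t = phiJordan13 (rho13 C w)}
      ≤ AddSubgroup.zmultiples C := by
    rw [AddSubgroup.closure_le]
    rintro t ⟨w, hne, hgen, rfl⟩
    obtain ⟨nn, -, hnn⟩ := main w hne hgen
    exact ⟨(nn : ℤ), by push_cast [hnn, zsmul_eq_mul]; ring⟩
  obtain ⟨m, hm⟩ := AddSubgroup.mem_zmultiples_iff.1 (hle hx)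
  exact ⟨m, by rw [← hm, zsmul_eq_mul]; ring⟩
end
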